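/- arXiv:2503.04909 — 4 statements merged into one kernel-verified Lean document; each statement's English description precedes it below -/
import Mathlib

section
/- Combining a K-Lipschitz separable cost Φ(L) = ∑_t φ_t(L(t)) with the load-deviation bound: if s^A has at most F fractional entries, s^I agrees with s^A on integral entries, entries of both schedules lie in [0,1], and each P^{(j)} has nonnegative entries with column sums at most M, then Φ(L^I) - Φ(L^A) ≤ K·M·F, where L^A and L^I are the aggregate loads induced by s^A and s^I respectively. -/
/-!
Each term `φ_t` moves by at most `K` times the deviation of the load at `t`, and the total
load deviation is at most `M` times the total schedule deviation, because every unit of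
schedule deviation is spread over the loads with total weight at most `M`. The schedule
deviation vanishes on integral entries of `s^A` and is at most `1` on each of the at most `F`
fractional ones.
-/

open Finset

lemma sum_sub_sum_le_of_abs_sub_le {ι : Type*} [Fintype ι] {K : ℝ} (φ : ι → ℝ → ℝ)
    (hφ : ∀ i x y, |φ i x - φ i y| ≤ K * |x - y|) (x y : ι → ℝ) :
    ∑ i, φ i (x i) - ∑ i, φ i (y i) ≤ K * ∑ i, |x i - y i| := by
  rw [← sum_sub_distrib, mul_sum]
  exact sum_le_sum fun i _ => (le_abs_self _).trans (hφ i (x i) (y i))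

lemma sum_abs_load_sub_le {J ι : Type*} [Fintype J] [Fintype ι] {M : ℝ}
    (P : J → Matrix ι ι ℝ) (hPnn : ∀ j t t', 0 ≤ P j t t')
    (hPcol : ∀ j t', ∑ t, P j t t' ≤ M) (a b : J → ι → ℝ) :
    ∑ t, |∑ j, ∑ t', P j t t' * a j t' - ∑ j, ∑ t', P j t t' * b j t'|
      ≤ M * ∑ j, ∑ t', |a j t' - b j t'| := by
  have hpoint : ∀ t, |∑ j, ∑ t', P j t t' * a j t' - ∑ j, ∑ t', P j t t' * b j t'|
      ≤ ∑ j, ∑ t', P j t t' * |a j t' - b j t'| := fun t => by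
    simp only [← sum_sub_distrib, ← mul_sub]
    refine (abs_sum_le_sum_abs _ _).trans (sum_le_sum fun j _ => ?_)
    refine (abs_sum_le_sum_abs _ _).trans (sum_le_sum fun t' _ => ?_)
    rw [abs_mul, abs_of_nonneg (hPnn j t t')]
  calc ∑ t, |∑ j, ∑ t', P j t t' * a j t' - ∑ j, ∑ t', P j t t' * b j t'|
      ≤ ∑ t, ∑ j, ∑ t', P j t t' * |a j t' - b j t'| := sum_le_sum fun t _ => hpoint t
    _ = ∑ j, ∑ t', (∑ t, P j t t') * |a j t' - b j t'| := by
        simp only [sum_mul]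
        rw [sum_comm]
        exact sum_congr rfl fun j _ => sum_comm
    _ ≤ ∑ j, ∑ t', M * |a j t' - b j t'| :=
        sum_le_sum fun j _ => sum_le_sum fun t' _ =>
          mul_le_mul_of_nonneg_right (hPcol j t') (abs_nonneg _)
    _ = M * ∑ j, ∑ t', |a j t' - b j t'| := by simp only [mul_sum]

lemma sum_le_ncard_of_le_one {α : Type*} [Fintype α] (d : α → ℝ) (S : Set α)
    (hle : ∀ a ∈ S, d a ≤ 1) (hzero : ∀ a ∉ S, d a = 0) : ∑ a, d a ≤ S.ncard := by
  classical
  rw [Set.ncard_eq_toFinset_card',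
    ← sum_subset (subset_univ S.toFinset) fun a _ ha => hzero a (by simpa using ha)]
  simpa using sum_le_card_nsmul S.toFinset d 1 fun a ha => hle a (by simpa using ha)

/-- Combining a `K`-Lipschitz separable cost with the load-deviation bound:
if `s^A` has at most `F` fractional entries, `s^I` agrees with `s^A` on
integral entries, all entries of both schedules lie in `[0,1]`, and each
`P^{(j)}` is nonnegative with column sums at most `M`, then
`Φ(L^I) - Φ(L^A) ≤ K·M·F`. -/
theorem stmt4 {J : Type*} [Fintype J] (T : ℕ) (K M : ℝ) (hK : 0 < K) (hM : 0 < M)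
    (φ : Fin T → ℝ → ℝ)
    (hφ : ∀ t : Fin T, ∀ x y : ℝ, |φ t x - φ t y| ≤ K * |x - y|)
    (P : J → Matrix (Fin T) (Fin T) ℝ)
    (hPnn : ∀ j t t', 0 ≤ P j t t')
    (hPcol : ∀ j t', ∑ t, P j t t' ≤ M)
    (sA sI : J → Fin T → ℝ)
    (hA01 : ∀ j t, sA j t ∈ Set.Icc (0 : ℝ) 1)
    (hI01 : ∀ j t, sI j t ∈ Set.Icc (0 : ℝ) 1)
    (hagree : ∀ j t, (sA j t = 0 ∨ sA j t = 1) → sI j t = sA j t)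
    (F : ℕ)
    (hF : {q : J × Fin T | sA q.1 q.2 ≠ 0 ∧ sA q.1 q.2 ≠ 1}.ncard ≤ F) :
    (∑ t : Fin T, φ t (∑ j, ∑ t', P j t t' * sI j t')) -
        (∑ t : Fin T, φ t (∑ j, ∑ t', P j t t' * sA j t'))
      ≤ K * M * F := by
  have hdev : ∑ j, ∑ t', |sI j t' - sA j t'| ≤ F := by
    rw [← Fintype.sum_prod_type']
    refine (sum_le_ncard_of_le_one _ _ (fun q _ => ?_) fun q hq => ?_).trans (by exact_mod_cast hF)
    · exact abs_sub_le_of_nonneg_of_le (hI01 _ _).1 (hI01 _ _).2 (hA01 _ _).1 (hA01 _ _).2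
    · rw [hagree q.1 q.2 (or_iff_not_and_not.mpr hq), sub_self, abs_zero]
  calc _ ≤ K * ∑ t, |∑ j, ∑ t', P j t t' * sI j t' - ∑ j, ∑ t', P j t t' * sA j t'| :=
        sum_sub_sum_le_of_abs_sub_le φ hφ _ _
    _ ≤ K * (M * ∑ j, ∑ t', |sI j t' - sA j t'|) :=
        mul_le_mul_of_nonneg_left (sum_abs_load_sub_le P hPnn hPcol sI sA) hK.le
    _ ≤ K * M * F := by
        rw [← mul_assoc]
        exact mul_le_mul_of_nonneg_left hdev (mul_nonneg hK.le hM.le)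
end

section
/- There exists a strongly convex differentiable ψ : ℝ → ℝ with strictly increasing derivative for which generalized monotonicity fails for d = 2: i.e., there exist x, y ∈ ℝ² with ∑ x_i < ∑ y_i but ∑ ψ'(x_i) ≥ ∑ ψ'(y_i). -/
/-!
Take `ψ z = z⁴/4 + z²/2`, so `ψ' z = z³ + z` and `ψ'' ≥ 1`. Because `ψ'` is not affine, summing
it does not preserve the order of sums: `x = (2, -3/2)` has the smaller coordinate sum
(`1/2 < 2` for `y = (1, 1)`) but `ψ'(2) + ψ'(-3/2) = 41/8 > 4 = 2 ψ'(1)`.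
-/

open Set

lemma ConvexOn.strongConvexOn_add_half_sq {E : Type*} [NormedAddCommGroup E]
    [InnerProductSpace ℝ E] {s : Set E} {f : E → ℝ} (hf : ConvexOn ℝ s f) (m : ℝ) :
    StrongConvexOn s m fun x ↦ f x + m / 2 * ‖x‖ ^ 2 :=
  strongConvexOn_iff_convex.2 (by simpa using hf)

noncomputable def quarticPotential (z : ℝ) : ℝ := z ^ 4 / 4 + z ^ 2 / 2

lemma hasDerivAt_quarticPotential (z : ℝ) : HasDerivAt quarticPotential (z ^ 3 + z) z :=
  (((hasDerivAt_pow 4 z).div_const 4).add ((hasDerivAt_pow 2 z).div_const 2)).congr_deriv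
    (by norm_num)

lemma differentiable_quarticPotential : Differentiable ℝ quarticPotential :=
  fun z ↦ (hasDerivAt_quarticPotential z).differentiableAt

lemma deriv_quarticPotential : deriv quarticPotential = fun z ↦ z ^ 3 + z :=
  funext fun z ↦ (hasDerivAt_quarticPotential z).deriv

lemma strictMono_deriv_quarticPotential : StrictMono (deriv quarticPotential) := by
  rw [deriv_quarticPotential]
  exact (Odd.strictMono_pow (R := ℝ) ⟨1, rfl⟩).add strictMono_id

lemma strongConvexOn_quarticPotential : StrongConvexOn univ 1 quarticPotential := by
  have hquartic : ConvexOn ℝ univ fun z : ℝ ↦ (1 / 4 : ℝ) • z ^ 4 :=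
    (Even.convexOn_pow ⟨2, rfl⟩).smul (by norm_num)
  convert hquartic.strongConvexOn_add_half_sq 1 using 2 with z
  simp only [quarticPotential, smul_eq_mul, Real.norm_eq_abs, sq_abs]
  ring

/-- There is a strongly convex differentiable `ψ : ℝ → ℝ` with strictly
increasing derivative for which generalized monotonicity fails in dimension 2:
some `x, y ∈ ℝ²` have `∑ x_i < ∑ y_i` but `∑ ψ'(x_i) ≥ ∑ ψ'(y_i)`. -/
theorem stmt8 :
    ∃ (ψ : ℝ → ℝ) (m : ℝ), 0 < m ∧ StrongConvexOn Set.univ m ψ ∧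
      Differentiable ℝ ψ ∧ StrictMono (deriv ψ) ∧
      ∃ x y : Fin 2 → ℝ,
        (∑ i, x i < ∑ i, y i) ∧ (∑ i, deriv ψ (y i) ≤ ∑ i, deriv ψ (x i)) := by
  refine ⟨quarticPotential, 1, one_pos, strongConvexOn_quarticPotential,
    differentiable_quarticPotential, strictMono_deriv_quarticPotential, ![2, -3/2], ![1, 1],
    ?_, ?_⟩
  · norm_num [Fin.sum_univ_two]
  · norm_num [deriv_quarticPotential, Fin.sum_univ_two]
end

section
/- Under the same setting, for each job j and any admissible schedule s'_j (s'_j(t) ∈ [0,1], ∑_t s'_j(t) = 1, supported in the admissible window), the payment satisfies λᵀ P^{(j)} s^I_j ≤ λᵀ P^{(j)} s'_j; i.e., no job has incentive to unilaterally deviate from the RAR schedule under marginal prices. -/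
/-!
The relaxed load `L^R` minimizes `Φ` over the image of the feasible set, which is convex, so the
first-order condition gives `λ ⬝ᵥ (L' - L^R) ≥ 0` for every feasible load `L'`. Changing only the
schedule of job `j` turns this into: `s^R_j` minimizes the linear price `λᵀ P^{(j)}` over the
admissible simplex of job `j`. A minimizer of a linear function on a simplex is supported on
cheapest slots, so `s^I_j`, whose support lies in that of `s^R_j`, pays the minimal price, which no
admissible `s'_j` can undercut.
-/

def Feasible {J : Type*} [Fintype J] {T : ℕ} (A : J → Finset (Fin T))
    (s : J → Fin T → ℝ) : Prop :=
  (∀ j t, s j t ∈ Set.Icc (0 : ℝ) 1) ∧ (∀ j, ∑ t, s j t = 1) ∧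
    (∀ j t, t ∉ A j → s j t = 0)

def aggLoad {J : Type*} [Fintype J] {T : ℕ} (P : J → Matrix (Fin T) (Fin T) ℝ)
    (s : J → Fin T → ℝ) : Fin T → ℝ :=
  fun τ => ∑ j, ∑ t, P j τ t * s j t

open Matrix

def Admissible {ι : Type*} [Fintype ι] (a : Finset ι) (w : ι → ℝ) : Prop :=
  (∀ t, w t ∈ Set.Icc (0 : ℝ) 1) ∧ ∑ t, w t = 1 ∧ ∀ t, t ∉ a → w t = 0

section Simplex

variable {ι : Type*} [Fintype ι] {c x : ι → ℝ} {m : ℝ}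

theorem le_dotProduct_of_forall_pos (hx0 : ∀ i, 0 ≤ x i) (hx1 : ∑ i, x i = 1)
    (hm : ∀ i, 0 < x i → m ≤ c i) : m ≤ c ⬝ᵥ x :=
  calc m = ∑ i, m * x i := by rw [← Finset.mul_sum, hx1, mul_one]
    _ ≤ c ⬝ᵥ x := Finset.sum_le_sum fun i _ => by
      rcases (hx0 i).eq_or_lt with h | h
      · simp [← h]
      · exact mul_le_mul_of_nonneg_right (hm i h) h.le

theorem dotProduct_eq_of_forall_pos (hx0 : ∀ i, 0 ≤ x i) (hx1 : ∑ i, x i = 1)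
    (hm : ∀ i, 0 < x i → c i = m) : c ⬝ᵥ x = m :=
  calc c ⬝ᵥ x
      _ = ∑ i, m * x i := Finset.sum_congr rfl fun i _ => by
        rcases (hx0 i).eq_or_lt with h | h
        · simp [← h]
        · rw [hm i h]
      _ = m := by rw [← Finset.mul_sum, hx1, mul_one]

theorem eq_of_dotProduct_le (hx0 : ∀ i, 0 ≤ x i) (hx1 : ∑ i, x i = 1)
    (hm : ∀ i, 0 < x i → m ≤ c i) (hle : c ⬝ᵥ x ≤ m) : ∀ i, 0 < x i → c i = m := by
  have hterm : ∀ i ∈ Finset.univ, 0 ≤ (c i - m) * x i := fun i _ => by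
    rcases (hx0 i).eq_or_lt with h | h
    · simp [← h]
    · exact mul_nonneg (sub_nonneg.2 (hm i h)) h.le
  have hsum : ∑ i, (c i - m) * x i = 0 := by
    refine le_antisymm ?_ (Finset.sum_nonneg hterm)
    simpa [dotProduct, sub_mul, Finset.sum_sub_distrib, ← Finset.mul_sum, hx1] using hle
  intro i hi
  have := (Finset.sum_eq_zero_iff_of_nonneg hterm).1 hsum i (Finset.mem_univ i)
  linarith [(mul_eq_zero.1 this).resolve_right hi.ne']

theorem Admissible.nonempty {a : Finset ι} (hx : Admissible a x) : a.Nonempty := by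
  by_contra h
  rw [Finset.not_nonempty_iff_eq_empty] at h
  simpa [hx.2.2 _ (by simp [h])] using hx.2.1

theorem Admissible.mem_of_pos {a : Finset ι} (hx : Admissible a x) {i : ι} (hi : 0 < x i) :
    i ∈ a := by
  by_contra h
  exact hi.ne' (hx.2.2 i h)

theorem admissible_single [DecidableEq ι] {a : Finset ι} {i : ι} (hi : i ∈ a) :
    Admissible a (Pi.single i 1) := by
  refine ⟨fun t => ?_, by simp, fun t ht => Pi.single_eq_of_ne (by rintro rfl; exact ht hi) _⟩
  rcases eq_or_ne t i with rfl | h <;> simp [*]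

theorem Admissible.exists_cost_eq_min {a : Finset ι} (hx : Admissible a x)
    (hmin : ∀ y, Admissible a y → c ⬝ᵥ x ≤ c ⬝ᵥ y) :
    ∃ m, (∀ i ∈ a, m ≤ c i) ∧ ∀ i, 0 < x i → c i = m := by
  classical
  obtain ⟨i₀, hi₀, hcheap⟩ := a.exists_min_image c hx.nonempty
  refine ⟨c i₀, hcheap, eq_of_dotProduct_le (fun i => (hx.1 i).1) hx.2.1
    (fun i hi => hcheap i (hx.mem_of_pos hi)) ?_⟩
  simpa using hmin _ (admissible_single hi₀)

end Simplex

theorem IsMinOn.fderiv_sub_nonneg {E : Type*} [NormedAddCommGroup E] [NormedSpace ℝ E]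
    {f : E → ℝ} {s : Set E} {a b : E} (hmin : IsMinOn f s a) (hs : Convex ℝ s) (ha : a ∈ s)
    (hb : b ∈ s) (hf : DifferentiableAt ℝ f a) : 0 ≤ fderiv ℝ f a (b - a) :=
  hmin.localize.hasFDerivWithinAt_nonneg hf.hasFDerivAt.hasFDerivWithinAt
    (sub_mem_posTangentConeAt_of_segment_subset (hs.segment_subset ha hb))

theorem ContinuousLinearMap.apply_eq_dotProduct {ι : Type*} [Fintype ι] [DecidableEq ι]
    (φ : (ι → ℝ) →L[ℝ] ℝ) (v : ι → ℝ) : φ v = (fun i => φ (Pi.single i 1)) ⬝ᵥ v := by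
  conv_lhs => rw [pi_eq_sum_univ' v, map_sum]
  simp [dotProduct, mul_comm]

section Schedule

variable {J : Type*} [Fintype J] {T : ℕ} {A : J → Finset (Fin T)}

theorem feasible_iff {s : J → Fin T → ℝ} : Feasible A s ↔ ∀ j, Admissible (A j) (s j) :=
  ⟨fun h j => ⟨h.1 j, h.2.1 j, h.2.2 j⟩,
    fun h => ⟨fun j => (h j).1, fun j => (h j).2.1, fun j => (h j).2.2⟩⟩

theorem Feasible.update [DecidableEq J] {s : J → Fin T → ℝ} (hs : Feasible A s) (j : J)
    {w : Fin T → ℝ} (hw : Admissible (A j) w) : Feasible A (Function.update s j w) := by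
  rw [feasible_iff] at hs ⊢
  intro j'
  rcases eq_or_ne j' j with rfl | h
  · simpa using hw
  · simpa [h] using hs j'

theorem convex_setOf_feasible : Convex ℝ {s : J → Fin T → ℝ | Feasible A s} := by
  intro x hx y hy a b ha hb hab
  refine ⟨fun j t => ?_, fun j => ?_, fun j t ht => ?_⟩
  · exact convex_Icc (0 : ℝ) 1 (hx.1 j t) (hy.1 j t) ha hb hab
  · simp [Finset.sum_add_distrib, ← Finset.mul_sum, hx.2.1 j, hy.2.1 j, hab]
  · simp [hx.2.2 j t ht, hy.2.2 j t ht]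

variable (P : J → Matrix (Fin T) (Fin T) ℝ)

theorem isLinearMap_aggLoad : IsLinearMap ℝ (aggLoad P) where
  map_add s s' := by
    funext τ; simp [aggLoad, mul_add, Finset.sum_add_distrib]
  map_smul c s := by
    funext τ; simp [aggLoad, Finset.mul_sum, mul_left_comm]

theorem aggLoad_update_sub [DecidableEq J] (s : J → Fin T → ℝ) (j : J) (w : Fin T → ℝ) :
    aggLoad P (Function.update s j w) - aggLoad P s = P j *ᵥ (w - s j) := by
  funext τ
  simp only [aggLoad, Pi.sub_apply, ← Finset.sum_sub_distrib]
  rw [Finset.sum_eq_single j (fun j' _ hj' => by simp [hj']) (by simp)]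
  simp [mulVec, dotProduct, mul_sub]

theorem vecMul_dotProduct_le_of_isMinOn [DecidableEq J] {Φ : (Fin T → ℝ) → ℝ}
    {s : J → Fin T → ℝ} (hs : Feasible A s)
    (hmin : ∀ s', Feasible A s' → Φ (aggLoad P s) ≤ Φ (aggLoad P s'))
    (hΦ : DifferentiableAt ℝ Φ (aggLoad P s)) (j : J) {w : Fin T → ℝ}
    (hw : Admissible (A j) w) {lam : Fin T → ℝ}
    (hlam : ∀ τ, lam τ = fderiv ℝ Φ (aggLoad P s) (Pi.single τ 1)) :
    (lam ᵥ* P j) ⬝ᵥ s j ≤ (lam ᵥ* P j) ⬝ᵥ w := by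
  obtain rfl : lam = fun τ => fderiv ℝ Φ (aggLoad P s) (Pi.single τ 1) := funext hlam
  have hconv : Convex ℝ (aggLoad P '' {s | Feasible A s}) :=
    convex_setOf_feasible.is_linear_image (isLinearMap_aggLoad P)
  have hminOn : IsMinOn Φ (aggLoad P '' {s | Feasible A s}) (aggLoad P s) :=
    isMinOn_iff.2 fun _ ⟨s', hs', hL⟩ => hL ▸ hmin s' hs'
  have h := hminOn.fderiv_sub_nonneg hconv ⟨s, hs, rfl⟩ ⟨_, hs.update j hw, rfl⟩ hΦ
  rw [aggLoad_update_sub, ContinuousLinearMap.apply_eq_dotProduct, mulVec_sub, dotProduct_sub,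
    dotProduct_mulVec, dotProduct_mulVec] at h
  linarith

end Schedule

theorem stmt12_general {J : Type*} [Fintype J] {T : ℕ}
    (P : J → Matrix (Fin T) (Fin T) ℝ)
    (A : J → Finset (Fin T))
    (Φ : (Fin T → ℝ) → ℝ)
    (hΦdiff : Differentiable ℝ Φ)
    (sR : J → Fin T → ℝ) (hfeas : Feasible A sR)
    (hopt : ∀ s, Feasible A s → Φ (aggLoad P sR) ≤ Φ (aggLoad P s))
    (lam : Fin T → ℝ)
    (hlam : ∀ τ, lam τ = fderiv ℝ Φ (aggLoad P sR) (Pi.single τ 1))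
    (sI : J → Fin T → ℝ)
    (hI01 : ∀ j t, sI j t = 0 ∨ sI j t = 1)
    (hIsum : ∀ j, ∑ t, sI j t = 1)
    (hsupp : ∀ j t, 0 < sI j t → 0 < sR j t) :
    ∀ j, ∀ s' : Fin T → ℝ,
      (∀ t, s' t ∈ Set.Icc (0 : ℝ) 1) → (∑ t, s' t = 1) →
      (∀ t, t ∉ A j → s' t = 0) →
      ∑ τ, lam τ * (∑ t, P j τ t * sI j t)
        ≤ ∑ τ, lam τ * (∑ t, P j τ t * s' t) := by
  classical
  intro j s' hs'01 hs'sum hs'supp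
  have hs' : Admissible (A j) s' := ⟨hs'01, hs'sum, hs'supp⟩
  obtain ⟨m, hcheap, hcost⟩ := (feasible_iff.1 hfeas j).exists_cost_eq_min
    fun w hw => vecMul_dotProduct_le_of_isMinOn P hfeas hopt (hΦdiff _) j hw hlam
  have hI0 : ∀ t, 0 ≤ sI j t := fun t => by rcases hI01 j t with h | h <;> simp [h]
  show lam ⬝ᵥ (P j *ᵥ sI j) ≤ lam ⬝ᵥ (P j *ᵥ s')
  rw [dotProduct_mulVec, dotProduct_mulVec]
  calc (lam ᵥ* P j) ⬝ᵥ sI j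
      _ = m := dotProduct_eq_of_forall_pos hI0 (hIsum j) fun t ht => hcost t (hsupp j t ht)
      _ ≤ (lam ᵥ* P j) ⬝ᵥ s' :=
        le_dotProduct_of_forall_pos (fun t => (hs'01 t).1) hs'sum fun t ht =>
          hcheap t (hs'.mem_of_pos ht)

/-- Self-scheduling: under the marginal prices `λ = ∇Φ(L^R)` of the convex
relaxation, for each job `j` and any admissible schedule `s'_j` (entries in
`[0,1]`, summing to 1, supported in the admissible window), the payment of the
RAR integral schedule `s^I_j` (whose support lies in `supp(s^R_j)`) satisfies
`λᵀ P^{(j)} s^I_j ≤ λᵀ P^{(j)} s'_j`: no job can profit by unilaterally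
deviating. -/
theorem stmt12 {J : Type*} [Fintype J] {T : ℕ}
    (p : J → ℝ) (d : J → ℕ) (P : J → Matrix (Fin T) (Fin T) ℝ)
    (hP : ∀ j (t' t : Fin T),
      P j t' t = if t ≤ t' ∧ (t' : ℕ) ≤ (t : ℕ) + d j - 1 then p j else 0)
    (A : J → Finset (Fin T))
    (Φ : (Fin T → ℝ) → ℝ) (hΦconv : ConvexOn ℝ Set.univ Φ)
    (hΦdiff : Differentiable ℝ Φ)
    (sR : J → Fin T → ℝ) (hfeas : Feasible A sR)
    (hopt : ∀ s, Feasible A s → Φ (aggLoad P sR) ≤ Φ (aggLoad P s))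
    (lam : Fin T → ℝ)
    (hlam : ∀ τ, lam τ = fderiv ℝ Φ (aggLoad P sR) (Pi.single τ 1))
    (sI : J → Fin T → ℝ)
    (hI01 : ∀ j t, sI j t = 0 ∨ sI j t = 1)
    (hIsum : ∀ j, ∑ t, sI j t = 1)
    (hsupp : ∀ j t, 0 < sI j t → 0 < sR j t) :
    ∀ j, ∀ s' : Fin T → ℝ,
      (∀ t, s' t ∈ Set.Icc (0 : ℝ) 1) → (∑ t, s' t = 1) →
      (∀ t, t ∉ A j → s' t = 0) →
      ∑ τ, lam τ * (∑ t, P j τ t * sI j t)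
        ≤ ∑ τ, lam τ * (∑ t, P j τ t * s' t) :=
  stmt12_general P A Φ hΦdiff sR hfeas hopt lam hlam sI hI01 hIsum hsupp
end

section
/- For the rectangular-load RAR algorithm, if the adjusted schedule s^A is feasible for the convex relaxation, Φ(L^A) = Φ(L^R) ≤ Φ(L*) (where L* is the optimal integral aggregate load), s^A has at most 2·d^max·T fractional entries, each column sum of P^{(j)} is at most p_j d_j, and each φ_t is K-Lipschitz, then any integral rounding s^I with supp(s^I_j) ⊆ supp(s^A_j) yields Φ(L^I) − Φ(L*) ≤ 2 d^max T K max_j (p_j d_j). -/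
/-- Sub-optimality bound for the rectangular-load RAR algorithm: if the
adjusted schedule `s^A` is feasible for the convex relaxation with
`Φ(L^A) ≤ Φ(L*)` (where `s*` is an optimal integral schedule), `s^A` has at
most `2·d^max·T` fractional entries, each `P^{(j)}` is nonnegative with column
sums at most `p_j d_j`, and each `φ_t` is `K`-Lipschitz, then any integral
rounding `s^I` supported inside `supp(s^A)` satisfies
`Φ(L^I) − Φ(L*) ≤ 2 d^max T K max_j (p_j d_j)`. -/
theorem stmt17 {J : Type*} [Fintype J] [Nonempty J] (T dmax : ℕ) (K : ℝ)
    (hK : 0 < K)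
    (φ : Fin T → ℝ → ℝ)
    (hφ : ∀ t : Fin T, ∀ x y : ℝ, |φ t x - φ t y| ≤ K * |x - y|)
    (p : J → ℝ) (d : J → ℕ) (hd : ∀ j, d j ≤ dmax)
    (P : J → Matrix (Fin T) (Fin T) ℝ)
    (hPnn : ∀ j t t', 0 ≤ P j t t')
    (hPcol : ∀ j t', ∑ t, P j t t' ≤ p j * (d j : ℝ))
    (A : J → Finset (Fin T))
    (sA : J → Fin T → ℝ) (hAfeas : Feasible A sA)
    (sStar : J → Fin T → ℝ) (hStarFeas : Feasible A sStar)
    (hStarInt : ∀ j t, sStar j t = 0 ∨ sStar j t = 1)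
    (hStarOpt : ∀ s, Feasible A s → (∀ j t, s j t = 0 ∨ s j t = 1) →
      ∑ t, φ t (aggLoad P sStar t) ≤ ∑ t, φ t (aggLoad P s t))
    (hAle : ∑ t, φ t (aggLoad P sA t) ≤ ∑ t, φ t (aggLoad P sStar t))
    (hfrac : {q : J × Fin T | sA q.1 q.2 ≠ 0 ∧ sA q.1 q.2 ≠ 1}.ncard
      ≤ 2 * dmax * T)
    (sI : J → Fin T → ℝ)
    (hI01 : ∀ j t, sI j t = 0 ∨ sI j t = 1)
    (hIsum : ∀ j, ∑ t, sI j t = 1)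
    (hsupp : ∀ j t, 0 < sI j t → 0 < sA j t) :
    (∑ t, φ t (aggLoad P sI t)) - (∑ t, φ t (aggLoad P sStar t))
      ≤ 2 * (dmax : ℝ) * (T : ℝ) * K *
        Finset.univ.sup' Finset.univ_nonempty (fun j => p j * (d j : ℝ)) := by

  classical
  obtain ⟨j0⟩ := ‹Nonempty J›
  rcases Nat.eq_zero_or_pos T with hT | hT
  · exfalso
    have h1 := hIsum j0
    subst hT
    simp at h1
  set M := Finset.univ.sup' Finset.univ_nonempty (fun j => p j * (d j : ℝ)) with hMdef
  have hMj : ∀ j, p j * (d j : ℝ) ≤ M := fun j => by rw [hMdef]; exact Finset.le_sup' (fun j => p j * (d j : ℝ)) (Finset.mem_univ j)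
  have t0 : Fin T := ⟨0, hT⟩
  have hM0 : 0 ≤ M :=
    le_trans (le_trans (Finset.sum_nonneg fun t _ => hPnn j0 t t0) (hPcol j0 t0)) (hMj j0)
  obtain ⟨hA01, hAsum, -⟩ := hAfeas
  -- sI = sA wherever sA is integral
  have hIeq : ∀ j t, (sA j t = 0 ∨ sA j t = 1) → sI j t = sA j t := by
    intro j t h
    rcases h with h | h
    · rw [h]
      rcases hI01 j t with h' | h'
      · exact h'
      · exfalso
        have h2 := hsupp j t (by rw [h']; norm_num)
        rw [h] at h2; exact lt_irrefl _ h2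
    · rw [h]
      have hz : ∀ t', t' ≠ t → sA j t' = 0 := by
        intro t' ht'
        have hsum := hAsum j
        have he := Finset.add_sum_erase Finset.univ (sA j) (Finset.mem_univ t)
        rw [hsum, h] at he
        have hzero : ∑ s ∈ Finset.univ.erase t, sA j s = 0 := by linarith
        have hnn : ∀ s ∈ Finset.univ.erase t, 0 ≤ sA j s := fun s _ => (hA01 j s).1
        exact (Finset.sum_eq_zero_iff_of_nonneg hnn).mp hzero t'
          (Finset.mem_erase.mpr ⟨ht', Finset.mem_univ _⟩)
      have hIz : ∀ t', t' ≠ t → sI j t' = 0 := by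
        intro t' ht'
        rcases hI01 j t' with h' | h'
        · exact h'
        · exfalso
          have h2 := hsupp j t' (by rw [h']; norm_num)
          rw [hz t' ht'] at h2; exact lt_irrefl _ h2
      have hIs := hIsum j
      rwa [Finset.sum_eq_single t (fun b _ hb => hIz b hb) (by simp)] at hIs
  set F : Finset (J × Fin T) :=
    Finset.univ.filter (fun q => sA q.1 q.2 ≠ 0 ∧ sA q.1 q.2 ≠ 1) with hF
  have hFcard : (F.card : ℝ) ≤ 2 * (dmax : ℝ) * (T : ℝ) := by
    have hset : {q : J × Fin T | sA q.1 q.2 ≠ 0 ∧ sA q.1 q.2 ≠ 1} = ↑F := by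
      ext q; simp [hF]
    rw [hset, Set.ncard_coe_finset] at hfrac
    calc (F.card : ℝ) ≤ ((2 * dmax * T : ℕ) : ℝ) := Nat.cast_le.mpr hfrac
      _ = 2 * (dmax : ℝ) * (T : ℝ) := by push_cast; ring
  have hD : ∀ j t, |sI j t - sA j t| ≤ if (j, t) ∈ F then 1 else 0 := by
    intro j t
    by_cases hq : (j, t) ∈ F
    · rw [if_pos hq]
      have h1 := (hA01 j t).1
      have h2 := (hA01 j t).2
      rw [abs_le]
      rcases hI01 j t with h | h <;> rw [h] <;> constructor <;> linarith
    · rw [if_neg hq]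
      have hint : sA j t = 0 ∨ sA j t = 1 := by
        by_contra hc
        push_neg at hc
        exact hq (Finset.mem_filter.mpr ⟨Finset.mem_univ _, hc⟩)
      rw [hIeq j t hint]; simp
  have hLip : (∑ t, φ t (aggLoad P sI t)) - (∑ t, φ t (aggLoad P sA t))
      ≤ K * ∑ t, |aggLoad P sI t - aggLoad P sA t| := by
    rw [← Finset.sum_sub_distrib, Finset.mul_sum]
    apply Finset.sum_le_sum
    intro t _
    exact le_trans (le_abs_self _) (hφ t _ _)
  have hagg : ∑ t, |aggLoad P sI t - aggLoad P sA t| ≤ 2 * (dmax : ℝ) * (T : ℝ) * M := by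
    have h1 : ∀ t, |aggLoad P sI t - aggLoad P sA t|
        ≤ ∑ j, ∑ s, P j t s * |sI j s - sA j s| := by
      intro t
      unfold aggLoad
      rw [← Finset.sum_sub_distrib]
      refine le_trans (Finset.abs_sum_le_sum_abs _ _) (Finset.sum_le_sum ?_)
      intro j _
      rw [← Finset.sum_sub_distrib]
      refine le_trans (Finset.abs_sum_le_sum_abs _ _) (Finset.sum_le_sum ?_)
      intro s _
      rw [← mul_sub, abs_mul, abs_of_nonneg (hPnn j t s)]
    calc ∑ t, |aggLoad P sI t - aggLoad P sA t|
        ≤ ∑ t, ∑ j, ∑ s, P j t s * |sI j s - sA j s| :=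
          Finset.sum_le_sum fun t _ => h1 t
      _ = ∑ j, ∑ s, (∑ t, P j t s) * |sI j s - sA j s| := by
          rw [Finset.sum_comm]
          refine Finset.sum_congr rfl fun j _ => ?_
          rw [Finset.sum_comm]
          exact Finset.sum_congr rfl fun s _ => (Finset.sum_mul _ _ _).symm
      _ ≤ ∑ j, ∑ s, (if (j, s) ∈ F then M else 0) := by
          refine Finset.sum_le_sum fun j _ => Finset.sum_le_sum fun s _ => ?_
          by_cases hq : (j, s) ∈ F
          · rw [if_pos hq]
            have hd1 : |sI j s - sA j s| ≤ 1 := by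
              have := hD j s; rwa [if_pos hq] at this
            have hp1 : ∑ t, P j t s ≤ M := le_trans (hPcol j s) (hMj j)
            have hp0 : 0 ≤ ∑ t, P j t s := Finset.sum_nonneg fun t _ => hPnn j t s
            calc (∑ t, P j t s) * |sI j s - sA j s| ≤ M * 1 :=
                  mul_le_mul hp1 hd1 (abs_nonneg _) hM0
              _ = M := mul_one M
          · rw [if_neg hq]
            have hd0 : |sI j s - sA j s| ≤ 0 := by
              have := hD j s; rwa [if_neg hq] at this
            have : sI j s - sA j s = 0 := abs_eq_zero.mp (le_antisymm hd0 (abs_nonneg _))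
            rw [this, abs_zero, mul_zero]
      _ = (F.card : ℝ) * M := by
          have e1 : (∑ q : J × Fin T, if q ∈ F then M else 0) = (F.card : ℝ) * M := by
            rw [Finset.sum_ite_mem, Finset.univ_inter, Finset.sum_const, nsmul_eq_mul]
          rw [← e1, Fintype.sum_prod_type]
      _ ≤ 2 * (dmax : ℝ) * (T : ℝ) * M := mul_le_mul_of_nonneg_right hFcard hM0
  calc (∑ t, φ t (aggLoad P sI t)) - (∑ t, φ t (aggLoad P sStar t))
      ≤ (∑ t, φ t (aggLoad P sI t)) - (∑ t, φ t (aggLoad P sA t)) := by linarith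
    _ ≤ K * ∑ t, |aggLoad P sI t - aggLoad P sA t| := hLip
    _ ≤ K * (2 * (dmax : ℝ) * (T : ℝ) * M) :=
        mul_le_mul_of_nonneg_left hagg hK.le
    _ = 2 * (dmax : ℝ) * (T : ℝ) * K * M := by ring
end
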